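/- For every k ≥ 3, every n ≥ 1, and every graph automorphism g of the Tower of Hanoi graph H_n^k, the automorphism g permutes the perfect states: for each peg i there exists a unique peg j such that g maps the perfect state \overline{i} to the perfect state \overline{j}. -/

import Mathlib

/-!
For `k ≥ 3` the perfect states are exactly the vertices of `H_n^k` whose neighbourhood is a
clique, a property preserved by graph isomorphisms. Every neighbour of a perfect state differs
from it only in the smallest disk, so any two of them are adjacent. A state `v` that is not
perfect has two neighbours which are not adjacent: move disk `0` to another peg, or move the
smallest disk `d` with `v d ≠ v 0` to a peg other than `v 0` and `v d`; these two neighbours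
differ in two disks, whereas adjacent states differ in exactly one.
-/

/-- The Tower of Hanoi graph `H_n^k`: vertices are functions `Fin n → Fin k`
(disk `i` lies on peg `v i`; smaller indices are smaller disks); two states are
adjacent iff they differ by one legal move of a single disk `d`: the position of
`d` changes, all other disks stay, and no smaller disk lies on the source peg or
the target peg of `d`. -/
def hanoiGraph (n k : ℕ) : SimpleGraph (Fin n → Fin k) where
  Adj v w := ∃ d : Fin n, v d ≠ w d ∧ (∀ i : Fin n, i ≠ d → v i = w i) ∧
    (∀ i : Fin n, i < d → v i ≠ v d ∧ v i ≠ w d)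
  symm := by
    constructor
    rintro v w ⟨d, h1, h2, h3⟩
    refine ⟨d, h1.symm, fun i hi => (h2 i hi).symm, fun i hi => ?_⟩
    have he : v i = w i := h2 i (ne_of_lt hi)
    have h := h3 i hi
    exact ⟨he ▸ h.2, he ▸ h.1⟩
  loopless := by constructor; rintro v ⟨d, h1, -⟩; exact h1 rfl

theorem SimpleGraph.Iso.isClique_neighborSet {V W : Type*} {G : SimpleGraph V}
    {H : SimpleGraph W} (g : G ≃g H) {v : V} (hv : G.IsClique (G.neighborSet v)) :
    H.IsClique (H.neighborSet (g v)) := by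
  intro x hx y hy hxy
  have hx' : G.Adj v (g.symm x) := by simpa [← g.map_adj_iff] using hx
  have hy' : G.Adj v (g.symm y) := by simpa [← g.map_adj_iff] using hy
  simpa using g.map_adj_iff.2 (hv hx' hy' (g.symm.injective.ne hxy))

namespace hanoiGraph

variable {n k : ℕ}

theorem adj_update {v : Fin n → Fin k} {d : Fin n} {p : Fin k} (hp : v d ≠ p)
    (hfree : ∀ i < d, v i ≠ v d ∧ v i ≠ p) :
    (hanoiGraph n k).Adj v (Function.update v d p) :=
  ⟨d, by simpa using hp, fun i hi => (Function.update_of_ne hi p v).symm, by simpa using hfree⟩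

theorem eq_of_adj_of_ne {v w : Fin n → Fin k} (h : (hanoiGraph n k).Adj v w) {i j : Fin n}
    (hi : v i ≠ w i) (hj : v j ≠ w j) : i = j := by
  obtain ⟨d, -, hvw, -⟩ := h
  exact (not_imp_comm.1 (hvw i) hi).trans (not_imp_comm.1 (hvw j) hj).symm

theorem isClique_neighborSet_const (c : Fin k) :
    (hanoiGraph n k).IsClique ((hanoiGraph n k).neighborSet fun _ => c) := by
  rintro w₁ ⟨d₁, -, heq₁, hfree₁⟩ w₂ ⟨d₂, -, heq₂, hfree₂⟩ hw
  -- a disk moved out of a perfect state has no smaller disk, since all disks share its peg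
  have hmin₁ : ∀ i, ¬ i < d₁ := fun i hi => (hfree₁ i hi).1 rfl
  have hmin₂ : ∀ i, ¬ i < d₂ := fun i hi => (hfree₂ i hi).1 rfl
  obtain rfl : d₁ = d₂ := le_antisymm (not_lt.1 (hmin₁ d₂)) (not_lt.1 (hmin₂ d₁))
  have hrest : ∀ i, i ≠ d₁ → w₁ i = w₂ i := fun i hi => (heq₁ i hi).symm.trans (heq₂ i hi)
  refine ⟨d₁, fun hd => hw (funext fun i => ?_), hrest, fun i hi => (hmin₁ i hi).elim⟩
  by_cases hi : i = d₁
  · exact hi ▸ hd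
  · exact hrest i hi

theorem exists_eq_const_of_isClique_neighborSet (hk : 3 ≤ k) {v : Fin n → Fin k}
    (hv : (hanoiGraph n k).IsClique ((hanoiGraph n k).neighborSet v)) :
    ∃ c, v = fun _ => c := by
  cases n with
  | zero => exact ⟨⟨0, by omega⟩, funext fun d => d.elim0⟩
  | succ n =>
    by_contra hconst
    have hne : {d | v d ≠ v 0}.Nonempty := by
      by_contra hempty
      refine hconst ⟨v 0, funext fun d => ?_⟩
      by_contra hd
      exact hempty ⟨d, hd⟩
    obtain ⟨d, hd, hmin⟩ := wellFounded_lt.has_min _ hne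
    have hbelow : ∀ i < d, v i = v 0 := fun i hi => not_not.1 fun h => hmin i h hi
    have hd0 : d ≠ 0 := fun h => hd (congrArg v h)
    obtain ⟨p, hp, -⟩ := Fin.exists_ne_and_ne_of_two_lt (v 0) (v 0) hk
    obtain ⟨q, hq₀, hqd⟩ := Fin.exists_ne_and_ne_of_two_lt (v 0) (v d) hk
    have hadj₀ : (hanoiGraph n.succ k).Adj v (Function.update v 0 p) :=
      adj_update (Ne.symm hp) fun i hi => (Fin.not_lt_zero i hi).elim
    have hadjd : (hanoiGraph n.succ k).Adj v (Function.update v d q) :=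
      adj_update (Ne.symm hqd) fun i hi => by
        rw [hbelow i hi]
        exact ⟨Ne.symm hd, Ne.symm hq₀⟩
    have hdiff₀ : Function.update v 0 p 0 ≠ Function.update v d q 0 := by
      simpa [Function.update_of_ne hd0.symm] using hp
    have hdiffd : Function.update v 0 p d ≠ Function.update v d q d := by
      simpa [Function.update_of_ne hd0] using hqd.symm
    exact hd0 (eq_of_adj_of_ne (hv hadj₀ hadjd fun h => hdiff₀ (congrFun h 0)) hdiffd hdiff₀)

end hanoiGraph

/-- Every automorphism of the Tower of Hanoi graph `H_n^k` (k ≥ 3, n ≥ 1)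
permutes the perfect states: for each peg `i` there is a unique peg `j` with
`g(\overline{i}) = \overline{j}`. -/
theorem hanoi_aut_permutes_perfect_states (n k : ℕ) (hk : 3 ≤ k) (hn : 1 ≤ n)
    (g : hanoiGraph n k ≃g hanoiGraph n k) (i : Fin k) :
    ∃! j : Fin k, g (fun _ => i) = fun _ => j := by
  obtain ⟨j, hj⟩ := hanoiGraph.exists_eq_const_of_isClique_neighborSet hk
    (g.isClique_neighborSet (hanoiGraph.isClique_neighborSet_const i))
  exact ⟨j, hj, fun j' hj' => congrFun (hj'.symm.trans hj) ⟨0, hn⟩⟩
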